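/- (Splitting of a perfect dyadic Calderón–Zygmund operator.) Let T be a perfect dyadic Calderón–Zygmund operator. Then for every f ∈ S and every lacunary tile Q ∈ 𝐏⁺ one has the exact identity ⟨Tf, φ_Q⟩ = ⟨Tφ_Q, φ_Q⟩·Wf(Q) + W(T1)(Q)·[f]_{I_Q} + Σ_{P∈𝐏⁺} W(T*1)(P)·Wf(P)·[φ_Q]_{I_P}, where T1 and T*1 denote T and its transpose T* applied to the constant function 1 on [0, 2^M]. -/

import Mathlib

open MeasureTheory Set

noncomputable section

namespace Dyadic

/-- A dyadic interval/lacunary tile: `I = [j·2^k, (j+1)·2^k)` with `-M ≤ k ≤ M`,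
`I ⊆ [0, 2^M)`.  Lacunary tiles are in bijection with dyadic intervals, so we
identify the tile `P⁺(I) = I × [1/|I|, 2/|I|)` with the data of `I`. -/
structure Tile (M : ℕ) where
  j : ℤ
  k : ℤ
  hk_lb : -(M : ℤ) ≤ k
  hk_ub : k ≤ (M : ℤ)
  hj : 0 ≤ j
  hsub : ((j : ℝ) + 1) * 2 ^ k ≤ 2 ^ (M : ℤ)

variable {M : ℕ}

/-- The side length `|I_P| = 2^k` of the spatial interval of the tile. -/
def Tile.len (P : Tile M) : ℝ := 2 ^ P.k

/-- The spatial interval `I_P` of the tile. -/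
def Tile.ival (P : Tile M) : Set ℝ :=
  Ico ((P.j : ℝ) * 2 ^ P.k) (((P.j : ℝ) + 1) * 2 ^ P.k)

/-- The order `P ≤′ Q` on lacunary tiles: `I_P ⊆ I_Q`. -/
def Tile.le (P Q : Tile M) : Prop := P.ival ⊆ Q.ival

/-- A (lacunary) tree: a collection of tiles together with a top tile. -/
structure Tree (M : ℕ) where
  tiles : Set (Tile M)
  top : Tile M
  top_mem : top ∈ tiles
  le_top : ∀ P ∈ tiles, P.le top

/-- `|I_T|`, the length of the spatial interval of the top of the tree. -/
def Tree.len (T : Tree M) : ℝ := T.top.len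

/-- A collection of tiles is convex if `P₁ ≤′ P ≤′ P₂` with `P₁, P₂` in the
collection implies `P` is in the collection. -/
def IsConvex (PP : Set (Tile M)) : Prop :=
  ∀ P₁ ∈ PP, ∀ P₂ ∈ PP, ∀ P : Tile M, P₁.le P → P.le P₂ → P ∈ PP

/-- The size `‖a‖_{size(T)} = (1/|I_T|) Σ_{P ∈ T} a(P)` of `a` on a tree `T`. -/
def treeSize (a : Tile M → ℝ) (T : Tree M) : ℝ :=
  (∑ᶠ P ∈ T.tiles, a P) / T.len

/-- The maximal size `‖a‖_{size*(PP)}`: the supremum of `‖a‖_{size(T)}` over all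
convex trees `T ⊆ PP` (by convention `0` if there are none). -/
def maxSize (a : Tile M → ℝ) (PP : Set (Tile M)) : ℝ :=
  sSup (insert 0 {s : ℝ | ∃ T : Tree M, T.tiles ⊆ PP ∧ IsConvex T.tiles ∧ s = treeSize a T})

/-- The complete tree `Tree(P) = {Q : Q ≤′ P}`. -/
def cTree (P : Tile M) : Set (Tile M) := {Q : Tile M | Q.le P}

/-- A tree `T` is complete with respect to `PP` if `T = Tree(P_T) ∩ PP`. -/
def Tree.IsCompleteIn (T : Tree M) (PP : Set (Tile M)) : Prop :=
  T.tiles = cTree T.top ∩ PP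

/-- `QQ` is an `α`-packing of the tree `T`: `QQ ⊆ T` and `Σ_{P ∈ QQ} |I_P| ≤ α|I_T|`. -/
def IsPacking (α : ℝ) (QQ : Set (Tile M)) (T : Tree M) : Prop :=
  QQ ⊆ T.tiles ∧ (∑ᶠ P ∈ QQ, Tile.len P) ≤ α * T.len

/-- `QQ` is a uniform `α`-packing of the tree `T`:
`Σ_{P ∈ QQ, I_P ⊆ J} |I_P| ≤ α|J|` for every dyadic interval `J`. -/
def IsUniformPacking (α : ℝ) (QQ : Set (Tile M)) (T : Tree M) : Prop :=
  QQ ⊆ T.tiles ∧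
    ∀ J : Tile M, (∑ᶠ P ∈ {P ∈ QQ | P.ival ⊆ J.ival}, Tile.len P) ≤ α * J.len

/-- Left half of the spatial interval. -/
def Tile.left (P : Tile M) : Set ℝ :=
  Ico ((P.j : ℝ) * 2 ^ P.k) (((P.j : ℝ) + 1 / 2) * 2 ^ P.k)

/-- Right half of the spatial interval. -/
def Tile.right (P : Tile M) : Set ℝ :=
  Ico (((P.j : ℝ) + 1 / 2) * 2 ^ P.k) (((P.j : ℝ) + 1) * 2 ^ P.k)

/-- The (mother) Haar wavelet `φ_P = |I_P|^{-1/2}(χ_{I_l} - χ_{I_r})`. -/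
def Tile.haar (P : Tile M) : ℝ → ℝ := fun x =>
  (Real.sqrt P.len)⁻¹ * (P.left.indicator 1 x - P.right.indicator 1 x)

/-- The Haar (wavelet) coefficient `Wf(P) = ⟨f, φ_P⟩`. -/
def waveCoeff (f : ℝ → ℝ) (P : Tile M) : ℝ := ∫ x, f x * P.haar x

/-- The average `[f]_{I_P} = (1/|I_P|)∫_{I_P} f`. -/
def tileAvg (f : ℝ → ℝ) (P : Tile M) : ℝ := (∫ x in P.ival, f x) / P.len

/-- The mean `‖f‖_{mean(P)} = (1/|I_P|)∫_{I_P} |f|`. -/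
def tileMean (f : ℝ → ℝ) (P : Tile M) : ℝ := (∫ x in P.ival, |f x|) / P.len

/-- The maximal mean `‖f‖_{mean*(PP)} = sup_{P ∈ PP} ‖f‖_{mean(P)}`. -/
def maxMean (f : ℝ → ℝ) (PP : Set (Tile M)) : ℝ :=
  sSup (insert 0 (tileMean f '' PP))

/-- The dyadic BMO norm `‖f‖_{BMO} = ‖|Wf|²‖_{size*(PP⁺)}^{1/2}`. -/
def bmoNorm (M : ℕ) (f : ℝ → ℝ) : ℝ :=
  Real.sqrt (maxSize (fun P : Tile M => waveCoeff f P ^ 2) univ)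

/-- The grid interval `[j·2^{-M}, (j+1)·2^{-M})` at the finest scale. -/
def gridIval (M : ℕ) (j : ℤ) : Set ℝ :=
  Ico ((j : ℝ) * 2 ^ (-(M : ℤ))) (((j : ℝ) + 1) * 2 ^ (-(M : ℤ)))

/-- A dyadic test function: supported on `[0, 2^M)` and constant on every dyadic
interval of length `2^{-M}`. -/
def IsTestFun (M : ℕ) (f : ℝ → ℝ) : Prop :=
  (∀ x : ℝ, x ∉ Ico (0 : ℝ) (2 ^ (M : ℤ)) → f x = 0) ∧
    ∀ j : ℤ, ∀ x ∈ gridIval M j, ∀ y ∈ gridIval M j, f x = f y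

/-- The `L²` norm. -/
def l2Norm (f : ℝ → ℝ) : ℝ := Real.sqrt (∫ x, f x ^ 2)

/-- The `L^∞` norm (as a supremum of values; adequate for test functions). -/
def supNorm (f : ℝ → ℝ) : ℝ := ⨆ x : ℝ, |f x|

/-- The weak `L^r` quasinorm `sup_{λ>0} λ |{|h| ≥ λ}|^{1/r}`. -/
def weakNorm (r : ℝ) (h : ℝ → ℝ) : ℝ :=
  sSup {s : ℝ | ∃ l : ℝ, 0 < l ∧ s = l * (volume {x : ℝ | l ≤ |h x|}).toReal ^ (1 / r)}

/-- The phase space projection `Π_T f = Σ_{P ∈ T} ⟨f, φ_P⟩ φ_P` onto a tree. -/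
def treeProj (T : Tree M) (f : ℝ → ℝ) : ℝ → ℝ := fun x =>
  ∑ᶠ P ∈ T.tiles, waveCoeff f P * P.haar x

/-- The high-low paraproduct `π_hl(f,g) = Σ_P Wf(P) [g]_P φ_P`. -/
def paraHL (M : ℕ) (f g : ℝ → ℝ) : ℝ → ℝ := fun x =>
  ∑ᶠ P : Tile M, waveCoeff f P * tileAvg g P * P.haar x

/-- The low-high paraproduct `π_lh(f,g) = Σ_P [f]_P Wg(P) φ_P`. -/
def paraLH (M : ℕ) (f g : ℝ → ℝ) : ℝ → ℝ := fun x =>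
  ∑ᶠ P : Tile M, tileAvg f P * waveCoeff g P * P.haar x

/-- The high-high paraproduct `π_hh(f,g) = Σ_P Wf(P) Wg(P) χ_{I_P}/|I_P|`. -/
def paraHH (M : ℕ) (f g : ℝ → ℝ) : ℝ → ℝ := fun x =>
  ∑ᶠ P : Tile M, waveCoeff f P * waveCoeff g P * P.ival.indicator 1 x / P.len

/-- The constant function `1` on `[0, 2^M)`. -/
def oneFn (M : ℕ) : ℝ → ℝ := (Ico (0 : ℝ) (2 ^ (M : ℤ))).indicator 1

/-- A perfect dyadic Calderón–Zygmund operator, recorded via its kernel `K` and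
kernel constant `A₀`. -/
structure PDCZ (M : ℕ) where
  K : ℝ → ℝ → ℝ
  A₀ : ℝ
  hA₀ : 0 < A₀
  meas : Measurable (Function.uncurry K)
  bound : ∀ x y : ℝ, x ≠ y → |K x y| ≤ A₀ / |x - y|
  perfectX : ∀ I J : Tile M, Disjoint I.ival J.ival →
    ∀ x ∈ I.ival, ∀ x' ∈ I.ival, ∀ y ∈ J.ival, K x y = K x' y
  perfectY : ∀ I J : Tile M, Disjoint I.ival J.ival →
    ∀ x ∈ I.ival, ∀ x' ∈ I.ival, ∀ y ∈ J.ival, K y x = K y x'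
  diag : ∀ I : Tile M, I.k = -(M : ℤ) → ∀ x ∈ I.ival, ∀ y ∈ I.ival, K x y = 0
  corner₁ : ∀ x ∈ Ico (0 : ℝ) (2 ^ ((M : ℤ) - 1)),
    ∀ y ∈ Ico ((2 : ℝ) ^ ((M : ℤ) - 1)) (2 ^ (M : ℤ)), K x y = 0
  corner₂ : ∀ x ∈ Ico ((2 : ℝ) ^ ((M : ℤ) - 1)) (2 ^ (M : ℤ)),
    ∀ y ∈ Ico (0 : ℝ) (2 ^ ((M : ℤ) - 1)), K x y = 0

/-- `Tf(x) = ∫ K(x,y) f(y) dy`. -/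
def PDCZ.app (Op : PDCZ M) (f : ℝ → ℝ) : ℝ → ℝ := fun x => ∫ y, Op.K x y * f y

/-- The transpose `T*f(x) = ∫ K(y,x) f(y) dy`. -/
def PDCZ.appT (Op : PDCZ M) (f : ℝ → ℝ) : ℝ → ℝ := fun x => ∫ y, Op.K y x * f y

/-- Complex-valued Haar coefficient. -/
def waveCoeffC (b : ℝ → ℂ) (P : Tile M) : ℂ := ∫ x, b x * (P.haar x : ℂ)

/-- Complex-valued average. -/
def tileAvgC (b : ℝ → ℂ) (P : Tile M) : ℂ := (∫ x in P.ival, b x) / (P.len : ℂ)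

/-- BMO norm of a complex-valued function. -/
def bmoNormC (M : ℕ) (b : ℝ → ℂ) : ℝ :=
  Real.sqrt (maxSize (fun P : Tile M => ‖waveCoeffC b P‖ ^ 2) univ)

/-- Complex-valued dyadic test functions. -/
def IsTestFunC (M : ℕ) (b : ℝ → ℂ) : Prop :=
  (∀ x : ℝ, x ∉ Ico (0 : ℝ) (2 ^ (M : ℤ)) → b x = 0) ∧
    ∀ j : ℤ, ∀ x ∈ gridIval M j, ∀ y ∈ gridIval M j, b x = b y

/-- The operator applied to a complex-valued function. -/
def PDCZ.appC (Op : PDCZ M) (b : ℝ → ℂ) : ℝ → ℂ := fun x => ∫ y, (Op.K x y : ℂ) * b y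

/-!
Every function in play is a step function on the grid of cells of length `2 ^ (-M - 1)` (half the
smallest dyadic length, so that the Haar functions of the smallest tiles are resolved), and by
perfectness the kernel is constant on products of such cells. All pairings thus reduce to a finite
bilinear form on the grid. There, on `I_Q`, expand `f = [f]_Q + ∑_{I_P ⊆ I_Q} Wf(P) φ_P`; the part
of `f` off `I_Q` is invisible to `φ_Q`, since the kernel is constant in `x ∈ I_Q` there and `φ_Q`
has mean zero. For `I_P ⊊ I_Q` the same cancellation confines `Tφ_P` to `I_P`, where `φ_Q` is
constant, equal to `[φ_Q]_{I_P}`; hence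
`⟨Tφ_P, φ_Q⟩ = [φ_Q]_{I_P} ⟨Tφ_P, 1⟩ = [φ_Q]_{I_P} W(T*1)(P)`. For every other tile
`[φ_Q]_{I_P} = 0`.
-/

/-! ### The fine grid and dyadic blocks of cells -/

def fineScale (M : ℕ) : ℝ := 2 ^ (-(M : ℤ) - 1)

def fineCount (M : ℕ) : ℕ := 2 ^ (2 * M + 1)

def finePt (M i : ℕ) : ℝ := i * fineScale M

def fineCell (M i : ℕ) : Set ℝ := Ico (finePt M i) (finePt M (i + 1))

lemma fineScale_pos : 0 < fineScale M := zpow_pos two_pos _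

lemma strictMono_finePt : StrictMono (finePt M) := fun _ _ h =>
  mul_lt_mul_of_pos_right (Nat.cast_lt.mpr h) fineScale_pos

lemma finePt_mem_fineCell (i : ℕ) : finePt M i ∈ fineCell M i :=
  ⟨le_rfl, strictMono_finePt (Nat.lt_succ_self i)⟩

lemma two_zpow_natCast_sub (n : ℕ) :
    (2 : ℝ) ^ ((n : ℤ) - M) = 2 ^ (n + 1) * fineScale M := by
  rw [fineScale, ← zpow_natCast, ← zpow_add₀ two_ne_zero]
  congr 1
  push_cast
  ring

lemma finePt_fineCount : finePt M (fineCount M) = 2 ^ (M : ℤ) := by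
  rw [finePt, fineCount, Nat.cast_pow, Nat.cast_ofNat, ← two_zpow_natCast_sub]
  congr 1
  push_cast
  ring

lemma Ico_zero_two_zpow :
    Ico (0 : ℝ) (2 ^ (M : ℤ)) = Ico (finePt M 0) (finePt M (fineCount M)) := by
  rw [finePt_fineCount, finePt, Nat.cast_zero, zero_mul]

lemma mem_Ico_finePt_iff {x : ℝ} {i a b : ℕ} (hx : x ∈ fineCell M i) :
    x ∈ Ico (finePt M a) (finePt M b) ↔ i ∈ Finset.Ico a b := by
  have hm := strictMono_finePt (M := M)
  obtain ⟨h₁, h₂⟩ := hx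
  rw [Finset.mem_Ico]
  constructor
  · rintro ⟨ha, hb⟩
    exact ⟨Nat.lt_succ_iff.mp (hm.lt_iff_lt.mp (ha.trans_lt h₂)), hm.lt_iff_lt.mp (h₁.trans_lt hb)⟩
  · rintro ⟨ha, hb⟩
    exact ⟨(hm.monotone ha).trans h₁, h₂.trans_le (hm.monotone hb)⟩

lemma exists_mem_fineCell {x : ℝ} (hx : x ∈ Ico (0 : ℝ) (2 ^ (M : ℤ))) :
    ∃ i < fineCount M, x ∈ fineCell M i := by
  have hδ := fineScale_pos (M := M)
  have hx₀ : 0 ≤ x / fineScale M := div_nonneg hx.1 hδ.le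
  refine ⟨⌊x / fineScale M⌋₊, ?_, ?_, ?_⟩
  · rw [Nat.floor_lt hx₀, div_lt_iff₀ hδ, ← finePt, finePt_fineCount]
    exact hx.2
  · rw [finePt, ← le_div_iff₀ hδ]
    exact Nat.floor_le hx₀
  · rw [finePt, Nat.cast_succ, ← div_lt_iff₀ hδ]
    exact Nat.lt_floor_add_one _

def dyadicBlock (q e : ℕ) : Finset ℕ := Finset.Ico (q * 2 ^ e) ((q + 1) * 2 ^ e)

lemma card_dyadicBlock (q e : ℕ) : (dyadicBlock q e).card = 2 ^ e := by
  rw [dyadicBlock, Nat.card_Ico, add_one_mul, Nat.add_sub_cancel_left]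

lemma dyadicBlock_nonempty (q e : ℕ) : (dyadicBlock q e).Nonempty := by
  rw [← Finset.card_pos, card_dyadicBlock]
  positivity

lemma dyadicBlock_zero (q : ℕ) : dyadicBlock q 0 = {q} := by
  simp [dyadicBlock]

lemma dyadicBlock_succ (q e : ℕ) :
    dyadicBlock q (e + 1) = dyadicBlock (2 * q) e ∪ dyadicBlock (2 * q + 1) e := by
  rw [dyadicBlock, dyadicBlock, dyadicBlock, Finset.Ico_union_Ico_eq_Ico
    (Nat.mul_le_mul_right _ (by omega)) (Nat.mul_le_mul_right _ (by omega))]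
  congr 1 <;> ring

lemma disjoint_dyadicBlock_two_mul (q e : ℕ) :
    Disjoint (dyadicBlock (2 * q) e) (dyadicBlock (2 * q + 1) e) :=
  Finset.Ico_disjoint_Ico_consecutive _ _ _

lemma dyadicBlock_subset_or_disjoint {q e r f : ℕ} (h : e ≤ f) :
    dyadicBlock q e ⊆ dyadicBlock r f ∨ Disjoint (dyadicBlock q e) (dyadicBlock r f) := by
  obtain ⟨d, rfl⟩ := Nat.exists_eq_add_of_le h
  have hc : 0 < 2 ^ d := by positivity
  have scale {a b : ℕ} (hab : a ≤ b * 2 ^ d) : a * 2 ^ e ≤ b * (2 ^ e * 2 ^ d) := by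
    calc a * 2 ^ e ≤ b * 2 ^ d * 2 ^ e := Nat.mul_le_mul_right _ hab
      _ = b * (2 ^ e * 2 ^ d) := by ring
  have scale' {a b : ℕ} (hab : a * 2 ^ d ≤ b) : a * (2 ^ e * 2 ^ d) ≤ b * 2 ^ e := by
    calc a * (2 ^ e * 2 ^ d) = a * 2 ^ d * 2 ^ e := by ring
      _ ≤ b * 2 ^ e := Nat.mul_le_mul_right _ hab
  simp only [dyadicBlock, pow_add, Finset.disjoint_left, Finset.mem_Ico]
  rcases lt_trichotomy (q / 2 ^ d) r with hlt | rfl | hgt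
  · have := scale (a := q + 1) ((Nat.div_lt_iff_lt_mul hc).mp hlt)
    right
    intro i hi hi'
    omega
  · left
    exact Finset.Ico_subset_Ico (scale' (Nat.div_mul_le_self _ _))
      (scale (by rw [add_one_mul]; exact Nat.lt_div_mul_add hc))
  · have := scale' ((Nat.le_div_iff_mul_le hc).mp (show r + 1 ≤ q / 2 ^ d from hgt))
    right
    intro i hi hi'
    omega

/-! ### Tiles as blocks of fine cells -/

def Tile.idx (P : Tile M) : ℕ := P.j.toNat

/-- `|I_P| = 2 ^ (P.exp + 1) · fineScale M`. -/
def Tile.exp (P : Tile M) : ℕ := (P.k + M).toNat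

def Tile.block (P : Tile M) : Finset ℕ := dyadicBlock P.idx (P.exp + 1)

def Tile.leftBlock (P : Tile M) : Finset ℕ := dyadicBlock (2 * P.idx) P.exp

def Tile.rightBlock (P : Tile M) : Finset ℕ := dyadicBlock (2 * P.idx + 1) P.exp

namespace Tile

lemma k_eq (P : Tile M) : P.k = P.exp - M := by
  have := P.hk_lb
  unfold exp
  omega

lemma idx_cast (P : Tile M) : (P.idx : ℝ) = P.j := by
  rw [idx, ← Int.cast_natCast, Int.toNat_of_nonneg P.hj]

lemma two_zpow_k (P : Tile M) : (2 : ℝ) ^ P.k = 2 ^ (P.exp + 1) * fineScale M := by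
  rw [P.k_eq, two_zpow_natCast_sub]

lemma len_pos (P : Tile M) : 0 < P.len := zpow_pos two_pos _

lemma ival_eq (P : Tile M) : P.ival =
    Ico (finePt M (P.idx * 2 ^ (P.exp + 1))) (finePt M ((P.idx + 1) * 2 ^ (P.exp + 1))) := by
  rw [ival, two_zpow_k]
  congr 1 <;> simp only [finePt, Nat.cast_mul, Nat.cast_pow, Nat.cast_ofNat, Nat.cast_add,
    Nat.cast_one, idx_cast] <;> ring

lemma left_eq (P : Tile M) : P.left =
    Ico (finePt M (2 * P.idx * 2 ^ P.exp)) (finePt M ((2 * P.idx + 1) * 2 ^ P.exp)) := by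
  rw [left, two_zpow_k]
  congr 1 <;> simp only [finePt, Nat.cast_mul, Nat.cast_pow, Nat.cast_ofNat, Nat.cast_add,
    Nat.cast_one, idx_cast] <;> ring

lemma right_eq (P : Tile M) : P.right =
    Ico (finePt M ((2 * P.idx + 1) * 2 ^ P.exp)) (finePt M ((2 * P.idx + 1 + 1) * 2 ^ P.exp)) := by
  rw [right, two_zpow_k]
  congr 1 <;> simp only [finePt, Nat.cast_mul, Nat.cast_pow, Nat.cast_ofNat, Nat.cast_add,
    Nat.cast_one, idx_cast] <;> ring

lemma mem_ival_iff (P : Tile M) {x : ℝ} {i : ℕ} (hx : x ∈ fineCell M i) :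
    x ∈ P.ival ↔ i ∈ P.block := by
  rw [ival_eq]
  exact mem_Ico_finePt_iff hx

lemma mem_left_iff (P : Tile M) {x : ℝ} {i : ℕ} (hx : x ∈ fineCell M i) :
    x ∈ P.left ↔ i ∈ P.leftBlock := by
  rw [left_eq]
  exact mem_Ico_finePt_iff hx

lemma mem_right_iff (P : Tile M) {x : ℝ} {i : ℕ} (hx : x ∈ fineCell M i) :
    x ∈ P.right ↔ i ∈ P.rightBlock := by
  rw [right_eq]
  exact mem_Ico_finePt_iff hx

lemma block_bound (P : Tile M) : (P.idx + 1) * 2 ^ (P.exp + 1) ≤ fineCount M := by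
  have h : finePt M ((P.idx + 1) * 2 ^ (P.exp + 1)) ≤ finePt M (fineCount M) := by
    rw [finePt_fineCount]
    convert P.hsub using 1
    rw [two_zpow_k, finePt]
    push_cast
    rw [idx_cast]
    ring
  exact strictMono_finePt.le_iff_le.mp h

lemma block_subset_range (P : Tile M) : P.block ⊆ Finset.range (fineCount M) := by
  intro i hi
  rw [block, dyadicBlock, Finset.mem_Ico] at hi
  exact Finset.mem_range.mpr (hi.2.trans_le P.block_bound)

lemma ival_subset (P : Tile M) : P.ival ⊆ Ico (0 : ℝ) (2 ^ (M : ℤ)) := by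
  rw [ival_eq, Ico_zero_two_zpow]
  exact Ico_subset_Ico (strictMono_finePt.monotone (Nat.zero_le _))
    (strictMono_finePt.monotone P.block_bound)

lemma left_subset_ival (P : Tile M) : P.left ⊆ P.ival := by
  rw [left_eq, ival_eq]
  refine Ico_subset_Ico (strictMono_finePt.monotone (le_of_eq (by ring)))
    (strictMono_finePt.monotone ?_)
  calc (2 * P.idx + 1) * 2 ^ P.exp ≤ (2 * P.idx + 2) * 2 ^ P.exp :=
        Nat.mul_le_mul_right _ (by omega)
    _ = _ := by ring

lemma right_subset_ival (P : Tile M) : P.right ⊆ P.ival := by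
  rw [right_eq, ival_eq]
  refine Ico_subset_Ico (strictMono_finePt.monotone ?_)
    (strictMono_finePt.monotone (le_of_eq (by ring)))
  calc P.idx * 2 ^ (P.exp + 1) = 2 * P.idx * 2 ^ P.exp := by ring
    _ ≤ _ := Nat.mul_le_mul_right _ (by omega)

lemma block_eq_union (P : Tile M) : P.block = P.leftBlock ∪ P.rightBlock :=
  dyadicBlock_succ _ _

lemma disjoint_leftBlock_rightBlock (P : Tile M) : Disjoint P.leftBlock P.rightBlock :=
  disjoint_dyadicBlock_two_mul _ _

lemma ext_of_idx_exp {P Q : Tile M} (hidx : P.idx = Q.idx) (hexp : P.exp = Q.exp) : P = Q := by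
  have hk : P.k = Q.k := by rw [P.k_eq, Q.k_eq, hexp]
  have hj : P.j = Q.j := by
    have := P.hj
    have := Q.hj
    unfold idx at hidx
    omega
  cases P
  cases Q
  simp_all

end Tile

instance : Finite (Tile M) :=
  Finite.of_injective
    (fun P : Tile M => ((⟨P.idx, Nat.lt_of_lt_of_le (Nat.lt_succ_self _)
        ((Nat.le_mul_of_pos_right _ (by positivity)).trans P.block_bound)⟩ : Fin (fineCount M)),
      (⟨P.exp, by have := P.hk_ub; have := P.hk_lb; unfold Tile.exp; omega⟩ : Fin (2 * M + 1))))
    fun _ _ h => Tile.ext_of_idx_exp (congrArg (Fin.val ∘ Prod.fst) h)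
      (congrArg (Fin.val ∘ Prod.snd) h)

noncomputable instance : Fintype (Tile M) := Fintype.ofFinite _

noncomputable instance : DecidableEq (Tile M) := Classical.decEq _

def mkTile (q n : ℕ) (h : (q + 1) * 2 ^ (n + 1) ≤ fineCount M) : Tile M where
  j := q
  k := n - M
  hk_lb := by omega
  hk_ub := by
    have : 2 ^ (n + 1) ≤ 2 ^ (2 * M + 1) := (Nat.le_mul_of_pos_left _ (by omega)).trans h
    have := (Nat.pow_le_pow_iff_right (by norm_num)).mp this
    omega
  hj := Int.natCast_nonneg q
  hsub := by
    rw [two_zpow_natCast_sub, ← finePt_fineCount, finePt, Int.cast_natCast]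
    calc ((q : ℝ) + 1) * (2 ^ (n + 1) * fineScale M)
        = (((q + 1) * 2 ^ (n + 1) : ℕ) : ℝ) * fineScale M := by push_cast; ring
      _ ≤ _ := by gcongr; exact fineScale_pos.le

lemma mkTile_block (q n : ℕ) (h : (q + 1) * 2 ^ (n + 1) ≤ fineCount M) :
    (mkTile q n h).block = dyadicBlock q (n + 1) := by
  simp [Tile.block, Tile.idx, Tile.exp, mkTile]

lemma mkTile_exp (q n : ℕ) (h : (q + 1) * 2 ^ (n + 1) ≤ fineCount M) :
    (mkTile q n h).exp = n := by
  simp [Tile.exp, mkTile]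

namespace Tile

lemma exp_le_of_block_subset {P Q : Tile M} (h : P.block ⊆ Q.block) : P.exp ≤ Q.exp := by
  have := Finset.card_le_card h
  rw [block, block, card_dyadicBlock, card_dyadicBlock,
    Nat.pow_le_pow_iff_right (by norm_num)] at this
  omega

lemma eq_of_block_subset {P Q : Tile M} (h : P.block ⊆ Q.block) (he : Q.exp ≤ P.exp) :
    P = Q := by
  have he' : P.exp = Q.exp := le_antisymm (exp_le_of_block_subset h) he
  have hE : 0 < 2 ^ (Q.exp + 1) := by positivity
  rw [block, block, he', dyadicBlock, dyadicBlock,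
    Finset.Ico_subset_Ico_iff (Nat.mul_lt_mul_of_pos_right (Nat.lt_succ_self _) hE)] at h
  have h₁ := Nat.le_of_mul_le_mul_right h.1 hE
  have h₂ := Nat.le_of_mul_le_mul_right h.2 hE
  exact ext_of_idx_exp (by omega) he'

lemma exp_lt_of_block_subset {P Q : Tile M} (h : P.block ⊆ Q.block) (hne : P ≠ Q) :
    P.exp < Q.exp :=
  lt_of_le_of_ne (exp_le_of_block_subset h) fun he => hne (eq_of_block_subset h he.ge)

lemma block_subset_or_subset_or_disjoint (P Q : Tile M) :
    P.block ⊆ Q.block ∨ Q.block ⊆ P.block ∨ Disjoint P.block Q.block := by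
  rcases le_total P.exp Q.exp with h | h
  · rcases dyadicBlock_subset_or_disjoint (q := P.idx) (r := Q.idx) (Nat.succ_le_succ h)
      with h' | h'
    exacts [Or.inl h', Or.inr (Or.inr h')]
  · rcases dyadicBlock_subset_or_disjoint (q := Q.idx) (r := P.idx) (Nat.succ_le_succ h)
      with h' | h'
    exacts [Or.inr (Or.inl h'), Or.inr (Or.inr h'.symm)]

lemma block_subset_half {P Q : Tile M} (h : P.block ⊆ Q.block) (hne : P ≠ Q) :
    P.block ⊆ Q.leftBlock ∨ P.block ⊆ Q.rightBlock := by
  rcases dyadicBlock_subset_or_disjoint (q := P.idx) (r := 2 * Q.idx)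
    (exp_lt_of_block_subset h hne) with hl | hd
  · exact Or.inl hl
  · refine Or.inr fun i hi => ?_
    have := h hi
    rw [block_eq_union, Finset.mem_union] at this
    exact this.resolve_left (Finset.disjoint_left.mp hd hi)

lemma disjoint_ival {P Q : Tile M} (h : Disjoint P.block Q.block) : Disjoint P.ival Q.ival := by
  rw [Set.disjoint_left]
  intro x hP hQ
  obtain ⟨i, -, hi⟩ := exists_mem_fineCell (P.ival_subset hP)
  exact Finset.disjoint_left.mp h ((P.mem_ival_iff hi).mp hP) ((Q.mem_ival_iff hi).mp hQ)

lemma exists_block_eq_half {Q : Tile M} {H : Finset ℕ} (hQ : 0 < Q.exp)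
    (hH : H = Q.leftBlock ∨ H = Q.rightBlock) : ∃ C : Tile M, C.block = H ∧ C.exp + 1 = Q.exp := by
  obtain ⟨n, hn⟩ : ∃ n, Q.exp = n + 1 := ⟨Q.exp - 1, by omega⟩
  have hb : (2 * Q.idx + 1 + 1) * 2 ^ (n + 1) ≤ fineCount M := by
    calc _ = (Q.idx + 1) * 2 ^ (Q.exp + 1) := by rw [hn]; ring
      _ ≤ _ := Q.block_bound
  rcases hH with rfl | rfl
  · refine ⟨mkTile (2 * Q.idx) n ((Nat.mul_le_mul_right _ (by omega)).trans hb), ?_, ?_⟩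
    · rw [mkTile_block, leftBlock, hn]
    · rw [mkTile_exp, hn]
  · refine ⟨mkTile (2 * Q.idx + 1) n hb, ?_, ?_⟩
    · rw [mkTile_block, rightBlock, hn]
    · rw [mkTile_exp, hn]

end Tile

/-- The tile of length `2 ^ (-M)` whose interval contains the `i`-th fine cell. -/
def fineTile (i : ℕ) (hi : i < fineCount M) : Tile M :=
  mkTile (i / 2) 0 (by have : fineCount M = 2 ^ (2 * M) * 2 := pow_succ _ _; omega)

lemma fineTile_k {i : ℕ} (hi : i < fineCount M) : (fineTile i hi).k = -M := by
  simp [fineTile, mkTile]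

lemma fineTile_block {i : ℕ} (hi : i < fineCount M) :
    (fineTile i hi).block = dyadicBlock (i / 2) 1 :=
  mkTile_block _ _ _

lemma mem_fineTile_block {i j : ℕ} (hi : i < fineCount M) :
    j ∈ (fineTile i hi).block ↔ j / 2 = i / 2 := by
  rw [fineTile_block, dyadicBlock, Finset.mem_Ico]
  omega

/-! ### Step functions on the fine grid -/

def sample (M : ℕ) (g : ℝ → ℝ) (i : ℕ) : ℝ := g (finePt M i)

def IsFineStep (M : ℕ) (g : ℝ → ℝ) : Prop :=
  (∀ x ∉ Ico (0 : ℝ) (2 ^ (M : ℤ)), g x = 0) ∧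
    ∀ i < fineCount M, ∀ x ∈ fineCell M i, g x = sample M g i

lemma measurableSet_fineCell (i : ℕ) : MeasurableSet (fineCell M i) := measurableSet_Ico

lemma volume_fineCell (i : ℕ) : volume.real (fineCell M i) = fineScale M := by
  rw [measureReal_def, fineCell, Real.volume_Ico, ENNReal.toReal_ofReal (sub_nonneg.mpr
    (strictMono_finePt (Nat.lt_succ_self i)).le), finePt, finePt]
  push_cast
  ring

namespace IsFineStep

variable {g h : ℝ → ℝ}

lemma eq_sum_indicator (hg : IsFineStep M g) (x : ℝ) :
    g x = ∑ i ∈ Finset.range (fineCount M), (fineCell M i).indicator (fun _ => sample M g i) x := by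
  by_cases hx : x ∈ Ico (0 : ℝ) (2 ^ (M : ℤ))
  · obtain ⟨i, hi, hxi⟩ := exists_mem_fineCell hx
    rw [Finset.sum_eq_single_of_mem i (Finset.mem_range.mpr hi), indicator_of_mem hxi,
      hg.2 i hi x hxi]
    intro i' _ hne
    apply indicator_of_notMem
    rw [fineCell, mem_Ico_finePt_iff hxi, Finset.mem_Ico]
    omega
  · rw [hg.1 x hx]
    refine (Finset.sum_eq_zero fun i hi => indicator_of_notMem (fun hxi => hx ?_) _).symm
    rw [Ico_zero_two_zpow, mem_Ico_finePt_iff hxi, Finset.mem_Ico]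
    exact ⟨Nat.zero_le i, Finset.mem_range.mp hi⟩

lemma integral (hg : IsFineStep M g) :
    ∫ x, g x = fineScale M * ∑ i ∈ Finset.range (fineCount M), sample M g i := by
  simp_rw [hg.eq_sum_indicator]
  rw [integral_finsetSum _ fun i _ => (integrable_indicator_iff (measurableSet_fineCell i)).mpr
    (integrableOn_const measure_Ico_lt_top.ne), Finset.mul_sum]
  refine Finset.sum_congr rfl fun i _ => ?_
  rw [integral_indicator_const _ (measurableSet_fineCell i), volume_fineCell, smul_eq_mul]

lemma mul (hg : IsFineStep M g) (hh : IsFineStep M h) : IsFineStep M (fun x => g x * h x) :=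
  ⟨fun x hx => show g x * h x = 0 by rw [hg.1 x hx, zero_mul],
    fun i hi x hx => show g x * h x = g _ * h _ by rw [hg.2 i hi x hx, hh.2 i hi x hx]; rfl⟩

lemma indicator_ival (hg : IsFineStep M g) (P : Tile M) : IsFineStep M (P.ival.indicator g) := by
  refine ⟨fun x hx => indicator_of_notMem (fun h => hx (P.ival_subset h)) g, fun i hi x hx => ?_⟩
  simp only [sample, indicator, P.mem_ival_iff hx, P.mem_ival_iff (finePt_mem_fineCell i),
    hg.2 i hi x hx]

lemma setIntegral_ival (hg : IsFineStep M g) (P : Tile M) :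
    ∫ x in P.ival, g x = fineScale M * ∑ i ∈ P.block, sample M g i := by
  rw [← integral_indicator (P.ival_eq ▸ measurableSet_Ico), (hg.indicator_ival P).integral,
    ← Finset.sum_subset P.block_subset_range]
  · refine congrArg _ (Finset.sum_congr rfl fun i hi => ?_)
    exact indicator_of_mem (P.mem_ival_iff (finePt_mem_fineCell i) |>.mpr hi) g
  · intro i _ hi
    exact indicator_of_notMem (fun h => hi ((P.mem_ival_iff (finePt_mem_fineCell i)).mp h)) g

end IsFineStep

lemma IsTestFun.isFineStep {f : ℝ → ℝ} (hf : IsTestFun M f) : IsFineStep M f := by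
  refine ⟨hf.1, fun i _ x hx => ?_⟩
  have hgrid : gridIval M (i / 2 : ℕ) =
      Ico (finePt M (2 * (i / 2))) (finePt M (2 * (i / 2) + 2)) := by
    rw [gridIval, show (-(M : ℤ)) = ((0 : ℕ) : ℤ) - M by simp, two_zpow_natCast_sub]
    congr 1 <;> simp only [finePt, Int.cast_natCast, Nat.cast_mul, Nat.cast_add,
      Nat.cast_ofNat] <;> ring
  have hmem : ∀ y ∈ fineCell M i, y ∈ gridIval M (i / 2 : ℕ) := fun y hy => by
    rw [hgrid, mem_Ico_finePt_iff hy, Finset.mem_Ico]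
    omega
  exact hf.2 _ x (hmem x hx) _ (hmem _ (finePt_mem_fineCell i))

lemma isFineStep_oneFn : IsFineStep M (oneFn M) := by
  refine ⟨fun x hx => indicator_of_notMem hx 1, fun i _ x hx => ?_⟩
  simp only [sample, oneFn, indicator, Ico_zero_two_zpow, mem_Ico_finePt_iff hx,
    mem_Ico_finePt_iff (finePt_mem_fineCell i), Pi.one_apply]

lemma sample_oneFn {i : ℕ} (hi : i < fineCount M) : sample M (oneFn M) i = 1 := by
  refine indicator_of_mem ?_ 1
  rw [Ico_zero_two_zpow, mem_Ico_finePt_iff (finePt_mem_fineCell i), Finset.mem_Ico]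
  exact ⟨Nat.zero_le i, hi⟩

namespace Tile

lemma haar_eq_zero_of_notMem (P : Tile M) {x : ℝ} (hx : x ∉ P.ival) : P.haar x = 0 := by
  rw [haar, indicator_of_notMem fun h => hx (P.left_subset_ival h),
    indicator_of_notMem fun h => hx (P.right_subset_ival h), sub_zero, mul_zero]

lemma isFineStep_haar (P : Tile M) : IsFineStep M P.haar := by
  refine ⟨fun x hx => P.haar_eq_zero_of_notMem fun h => hx (P.ival_subset h), fun i _ x hx => ?_⟩
  simp only [sample, haar, indicator, P.mem_left_iff hx, P.mem_right_iff hx,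
    P.mem_left_iff (finePt_mem_fineCell i), P.mem_right_iff (finePt_mem_fineCell i), Pi.one_apply]

lemma sample_haar_of_mem_leftBlock (P : Tile M) {i : ℕ} (hi : i ∈ P.leftBlock) :
    sample M P.haar i = (Real.sqrt P.len)⁻¹ := by
  have hr : i ∉ P.rightBlock := Finset.disjoint_left.mp P.disjoint_leftBlock_rightBlock hi
  simp [sample, haar, indicator, P.mem_left_iff (finePt_mem_fineCell i),
    P.mem_right_iff (finePt_mem_fineCell i), hi, hr]

lemma sample_haar_of_mem_rightBlock (P : Tile M) {i : ℕ} (hi : i ∈ P.rightBlock) :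
    sample M P.haar i = -(Real.sqrt P.len)⁻¹ := by
  have hl : i ∉ P.leftBlock := Finset.disjoint_right.mp P.disjoint_leftBlock_rightBlock hi
  simp [sample, haar, indicator, P.mem_left_iff (finePt_mem_fineCell i),
    P.mem_right_iff (finePt_mem_fineCell i), hi, hl]

lemma sample_haar_of_notMem_block (P : Tile M) {i : ℕ} (hi : i ∉ P.block) :
    sample M P.haar i = 0 :=
  P.haar_eq_zero_of_notMem fun h => hi ((P.mem_ival_iff (finePt_mem_fineCell i)).mp h)

lemma sum_sample_haar (P : Tile M) : ∑ i ∈ P.block, sample M P.haar i = 0 := by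
  rw [block_eq_union, Finset.sum_union P.disjoint_leftBlock_rightBlock,
    Finset.sum_congr rfl fun i hi => P.sample_haar_of_mem_leftBlock hi,
    Finset.sum_congr rfl fun i hi => P.sample_haar_of_mem_rightBlock hi]
  simp [leftBlock, rightBlock, card_dyadicBlock]

end Tile

/-! ### The kernel on the fine grid -/

def PDCZ.transpose (Op : PDCZ M) : PDCZ M where
  K x y := Op.K y x
  A₀ := Op.A₀
  hA₀ := Op.hA₀
  meas := Op.meas.comp measurable_swap
  bound x y hxy := abs_sub_comm x y ▸ Op.bound y x hxy.symm
  perfectX I J hIJ x hx x' hx' y hy := Op.perfectY I J hIJ x hx x' hx' y hy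
  perfectY I J hIJ x hx x' hx' y hy := Op.perfectX I J hIJ x hx x' hx' y hy
  diag I hI x hx y hy := Op.diag I hI y hy x hx
  corner₁ x hx y hy := Op.corner₂ y hy x hx
  corner₂ x hx y hy := Op.corner₁ y hy x hx

def sampleKernel (Op : PDCZ M) (i j : ℕ) : ℝ := Op.K (finePt M i) (finePt M j)

lemma mem_fineTile_ival {i j : ℕ} (hi : i < fineCount M) (hji : j / 2 = i / 2) {x : ℝ}
    (hx : x ∈ fineCell M j) : x ∈ (fineTile i hi).ival :=
  ((fineTile i hi).mem_ival_iff hx).mpr ((mem_fineTile_block hi).mpr hji)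

/-- The kernel is constant on the products of fine cells: it vanishes on the diagonal squares of
side `2 ^ (-M)` and is constant off them by perfectness. -/
lemma PDCZ.K_eq_sampleKernel (Op : PDCZ M) {i j : ℕ} (hi : i < fineCount M)
    (hj : j < fineCount M) {x y : ℝ} (hx : x ∈ fineCell M i) (hy : y ∈ fineCell M j) :
    Op.K x y = sampleKernel Op i j := by
  have hpi := finePt_mem_fineCell (M := M) i
  have hpj := finePt_mem_fineCell (M := M) j
  by_cases hij : j / 2 = i / 2
  · rw [sampleKernel, Op.diag _ (fineTile_k hi) x (mem_fineTile_ival hi rfl hx) y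
      (mem_fineTile_ival hi hij hy), Op.diag _ (fineTile_k hi) _ (mem_fineTile_ival hi rfl hpi) _
      (mem_fineTile_ival hi hij hpj)]
  · have hd : Disjoint (fineTile i hi).ival (fineTile j hj).ival := by
      refine Tile.disjoint_ival (Finset.disjoint_left.mpr fun k hk hk' => hij ?_)
      rw [mem_fineTile_block] at hk hk'
      omega
    calc Op.K x y = Op.K (finePt M i) y :=
          Op.perfectX _ _ hd x (mem_fineTile_ival hi rfl hx) _ (mem_fineTile_ival hi rfl hpi) y
            (mem_fineTile_ival hj rfl hy)
      _ = sampleKernel Op i j :=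
          Op.perfectY _ _ hd.symm y (mem_fineTile_ival hj rfl hy) _ (mem_fineTile_ival hj rfl hpj)
            _ (mem_fineTile_ival hi rfl hpi)

lemma disjoint_block_fineTile {P : Tile M} {j : ℕ} (hj : j < fineCount M) (hjP : j ∉ P.block) :
    Disjoint P.block (fineTile j hj).block := by
  rw [fineTile_block]
  rcases dyadicBlock_subset_or_disjoint (q := j / 2) (r := P.idx) (e := 1) (f := P.exp + 1)
    (by omega) with h | h
  · exact absurd (h (by rw [dyadicBlock, Finset.mem_Ico]; omega)) hjP
  · exact h.symm

lemma sampleKernel_eq_of_mem_block (Op : PDCZ M) {P : Tile M} {i i' j : ℕ} (hi : i ∈ P.block)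
    (hi' : i' ∈ P.block) (hj : j < fineCount M) (hjP : j ∉ P.block) :
    sampleKernel Op i j = sampleKernel Op i' j :=
  Op.perfectX P (fineTile j hj) (Tile.disjoint_ival (disjoint_block_fineTile hj hjP)) _
    ((P.mem_ival_iff (finePt_mem_fineCell i)).mpr hi) _
    ((P.mem_ival_iff (finePt_mem_fineCell i')).mpr hi') _
    (mem_fineTile_ival hj rfl (finePt_mem_fineCell j))

def applyKernel (Op : PDCZ M) (u : ℕ → ℝ) (i : ℕ) : ℝ :=
  ∑ j ∈ Finset.range (fineCount M), sampleKernel Op i j * u j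

def kernelForm (Op : PDCZ M) : (ℕ → ℝ) →ₗ[ℝ] (ℕ → ℝ) →ₗ[ℝ] ℝ :=
  LinearMap.mk₂ ℝ (fun u v => ∑ i ∈ Finset.range (fineCount M), applyKernel Op u i * v i)
    (fun u u' v => by
      simp only [applyKernel, ← Finset.sum_add_distrib, Finset.sum_mul]
      exact Finset.sum_congr rfl fun _ _ => Finset.sum_congr rfl fun _ _ => by simp; ring)
    (fun c u v => by
      simp only [applyKernel, Finset.mul_sum, Finset.sum_mul, smul_eq_mul]
      exact Finset.sum_congr rfl fun _ _ => Finset.sum_congr rfl fun _ _ => by simp; ring)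
    (fun u v v' => by
      simp only [← Finset.sum_add_distrib]
      exact Finset.sum_congr rfl fun _ _ => by simp; ring)
    (fun c u v => by
      simp only [Finset.mul_sum, smul_eq_mul]
      exact Finset.sum_congr rfl fun _ _ => by simp; ring)

lemma kernelForm_apply (Op : PDCZ M) (u v : ℕ → ℝ) :
    kernelForm Op u v = ∑ i ∈ Finset.range (fineCount M), applyKernel Op u i * v i := rfl

lemma kernelForm_transpose (Op : PDCZ M) (u v : ℕ → ℝ) :
    kernelForm Op.transpose u v = kernelForm Op v u := by
  simp only [kernelForm_apply, applyKernel, Finset.sum_mul]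
  rw [Finset.sum_comm]
  exact Finset.sum_congr rfl fun _ _ => Finset.sum_congr rfl fun _ _ => by
    simp only [sampleKernel, PDCZ.transpose]
    ring

lemma kernelForm_congr (Op : PDCZ M) {u u' v v' : ℕ → ℝ}
    (hu : ∀ j < fineCount M, u j = u' j) (hv : ∀ i < fineCount M, v i = v' i) :
    kernelForm Op u v = kernelForm Op u' v' := by
  simp only [kernelForm_apply, applyKernel]
  refine Finset.sum_congr rfl fun i hi => ?_
  rw [hv i (Finset.mem_range.mp hi)]
  congr 1
  exact Finset.sum_congr rfl fun j hj => by rw [hu j (Finset.mem_range.mp hj)]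

section Apply

variable {g : ℝ → ℝ}

lemma PDCZ.app_eq_applyKernel (Op : PDCZ M) (hg : IsFineStep M g) {i : ℕ}
    (hi : i < fineCount M) {x : ℝ} (hx : x ∈ fineCell M i) :
    Op.app g x = fineScale M * applyKernel Op (sample M g) i := by
  have hstep : IsFineStep M fun y => Op.K x y * g y :=
    ⟨fun y hy => show Op.K x y * g y = 0 by rw [hg.1 y hy, mul_zero],
      fun j hj y hy => show Op.K x y * g y = Op.K x _ * g _ by
        rw [Op.K_eq_sampleKernel hi hj hx hy, Op.K_eq_sampleKernel hi hj hx
          (finePt_mem_fineCell j), hg.2 j hj y hy]; rfl⟩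
  rw [PDCZ.app, hstep.integral]
  refine congrArg _ (Finset.sum_congr rfl fun j hj => ?_)
  simp only [sample]
  rw [Op.K_eq_sampleKernel hi (Finset.mem_range.mp hj) hx (finePt_mem_fineCell j)]

lemma PDCZ.waveCoeff_app (Op : PDCZ M) (hg : IsFineStep M g) (P : Tile M) :
    waveCoeff (Op.app g) P = fineScale M ^ 2 * kernelForm Op (sample M g) (sample M P.haar) := by
  have hstep : IsFineStep M fun x => Op.app g x * P.haar x :=
    ⟨fun x hx => show _ * _ = _ by rw [P.isFineStep_haar.1 x hx, mul_zero],
      fun i hi x hx => show _ * _ = _ * _ by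
        rw [Op.app_eq_applyKernel hg hi hx, Op.app_eq_applyKernel hg hi (finePt_mem_fineCell i),
          P.isFineStep_haar.2 i hi x hx]; rfl⟩
  rw [waveCoeff, hstep.integral, kernelForm_apply, Finset.mul_sum, Finset.mul_sum]
  refine Finset.sum_congr rfl fun i hi => ?_
  simp only [sample]
  rw [Op.app_eq_applyKernel hg (Finset.mem_range.mp hi) (finePt_mem_fineCell i)]
  ring

end Apply

/-! ### Haar coefficients and averages on the grid -/

def discreteCoeff (u : ℕ → ℝ) (P : Tile M) : ℝ :=
  fineScale M * ∑ i ∈ Finset.range (fineCount M), u i * sample M P.haar i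

def blockAvg (u : ℕ → ℝ) (P : Tile M) : ℝ := (∑ i ∈ P.block, u i) / 2 ^ (P.exp + 1)

section Transfer

variable {g : ℝ → ℝ}

lemma waveCoeff_eq_discreteCoeff (hg : IsFineStep M g) (P : Tile M) :
    waveCoeff g P = discreteCoeff (sample M g) P :=
  (hg.mul P.isFineStep_haar).integral

lemma tileAvg_eq_blockAvg (hg : IsFineStep M g) (P : Tile M) :
    tileAvg g P = blockAvg (sample M g) P := by
  rw [tileAvg, hg.setIntegral_ival, Tile.len, Tile.two_zpow_k, blockAvg,
    _root_.mul_comm (2 ^ _ : ℝ), mul_div_mul_left _ _ fineScale_pos.ne']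

end Transfer

lemma sum_range_mul_sample_haar (P : Tile M) (w : ℕ → ℝ) :
    ∑ i ∈ Finset.range (fineCount M), w i * sample M P.haar i =
      ∑ i ∈ P.block, w i * sample M P.haar i :=
  (Finset.sum_subset P.block_subset_range fun i _ hi => by
    rw [P.sample_haar_of_notMem_block hi, mul_zero]).symm

lemma sum_mul_sample_haar_eq_zero {P : Tile M} {w : ℕ → ℝ}
    (hw : ∀ i ∈ P.block, ∀ i' ∈ P.block, w i = w i') :
    ∑ i ∈ Finset.range (fineCount M), w i * sample M P.haar i = 0 := by
  obtain ⟨i₀, hi₀⟩ := dyadicBlock_nonempty P.idx (P.exp + 1)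
  rw [sum_range_mul_sample_haar, Finset.sum_congr rfl fun i hi => by rw [hw i hi i₀ hi₀],
    ← Finset.mul_sum, P.sum_sample_haar, mul_zero]

section KernelForm

variable (Op : PDCZ M)

lemma applyKernel_haar_eq_zero {P : Tile M} {i : ℕ} (hi : i < fineCount M) (hiP : i ∉ P.block) :
    applyKernel Op (sample M P.haar) i = 0 :=
  sum_mul_sample_haar_eq_zero fun _ hj _ hj' =>
    sampleKernel_eq_of_mem_block Op.transpose hj hj' hi hiP

lemma kernelForm_haar_eq_zero {Q : Tile M} {u : ℕ → ℝ} (hu : ∀ j ∈ Q.block, u j = 0) :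
    kernelForm Op u (sample M Q.haar) = 0 := by
  refine sum_mul_sample_haar_eq_zero fun i hi i' hi' => Finset.sum_congr rfl fun j hj => ?_
  by_cases hjQ : j ∈ Q.block
  · rw [hu j hjQ, mul_zero, mul_zero]
  · rw [sampleKernel_eq_of_mem_block Op hi hi' (Finset.mem_range.mp hj) hjQ]

lemma kernelForm_haar_congr {Q : Tile M} {u u' : ℕ → ℝ} (h : ∀ j ∈ Q.block, u j = u' j) :
    kernelForm Op u (sample M Q.haar) = kernelForm Op u' (sample M Q.haar) := by
  rw [← sub_eq_zero, ← LinearMap.sub_apply, ← map_sub]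
  exact kernelForm_haar_eq_zero Op fun j hj => by rw [Pi.sub_apply, h j hj, sub_self]

lemma kernelForm_haar_left (P : Tile M) (v : ℕ → ℝ) :
    kernelForm Op (sample M P.haar) v = ∑ i ∈ P.block, applyKernel Op (sample M P.haar) i * v i :=
  (Finset.sum_subset P.block_subset_range fun i hi hiP => by
    rw [applyKernel_haar_eq_zero Op (Finset.mem_range.mp hi) hiP, zero_mul]).symm

lemma kernelForm_haar_of_const {P : Tile M} {v : ℕ → ℝ} {c : ℝ} (hv : ∀ i ∈ P.block, v i = c) :
    kernelForm Op (sample M P.haar) v = c * kernelForm Op (sample M P.haar) 1 := by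
  rw [kernelForm_haar_left, kernelForm_haar_left, Finset.mul_sum]
  exact Finset.sum_congr rfl fun i hi => by rw [hv i hi, Pi.one_apply]; ring

end KernelForm

lemma blockAvg_of_const {P : Tile M} {v : ℕ → ℝ} {c : ℝ} (hv : ∀ i ∈ P.block, v i = c) :
    blockAvg v P = c := by
  rw [blockAvg, Finset.sum_congr rfl hv, Finset.sum_const, Tile.block, card_dyadicBlock,
    nsmul_eq_mul, Nat.cast_pow, Nat.cast_ofNat, mul_div_cancel_left₀ _ (by positivity)]

lemma blockAvg_haar_eq_zero_of_subset {P Q : Tile M} (h : Q.block ⊆ P.block) :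
    blockAvg (sample M Q.haar) P = 0 := by
  rw [blockAvg, ← Finset.sum_subset h fun i _ hi => Q.sample_haar_of_notMem_block hi,
    Q.sum_sample_haar, zero_div]

lemma blockAvg_haar_eq_zero_of_disjoint {P Q : Tile M} (h : Disjoint P.block Q.block) :
    blockAvg (sample M Q.haar) P = 0 := by
  rw [blockAvg, Finset.sum_eq_zero fun i hi =>
    Q.sample_haar_of_notMem_block (Finset.disjoint_left.mp h hi), zero_div]

def subtiles (Q : Tile M) : Finset (Tile M) := Finset.univ.filter fun P => P.block ⊆ Q.block

lemma mem_subtiles {P Q : Tile M} : P ∈ subtiles Q ↔ P.block ⊆ Q.block := by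
  simp [subtiles]

lemma blockAvg_haar_eq_zero_of_notMem {P Q : Tile M} (hP : P ∉ (subtiles Q).erase Q) :
    blockAvg (sample M Q.haar) P = 0 := by
  rw [Finset.mem_erase, mem_subtiles, not_and_or, not_not] at hP
  rcases P.block_subset_or_subset_or_disjoint Q with h | h | h
  · rcases hP with rfl | hP
    exacts [blockAvg_haar_eq_zero_of_subset subset_rfl, absurd h hP]
  · exact blockAvg_haar_eq_zero_of_subset h
  · exact blockAvg_haar_eq_zero_of_disjoint h

/-- A strictly smaller subtile `P` of `Q` sits in one half of `Q`, where `φ_Q` is constant. -/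
lemma kernelForm_haar_haar_of_ne (Op : PDCZ M) {P Q : Tile M} (h : P.block ⊆ Q.block)
    (hne : P ≠ Q) : kernelForm Op (sample M P.haar) (sample M Q.haar) =
      blockAvg (sample M Q.haar) P * kernelForm Op (sample M P.haar) 1 := by
  obtain ⟨c, hc⟩ : ∃ c, ∀ i ∈ P.block, sample M Q.haar i = c := by
    rcases Tile.block_subset_half h hne with h' | h'
    exacts [⟨_, fun i hi => Q.sample_haar_of_mem_leftBlock (h' hi)⟩,
      ⟨_, fun i hi => Q.sample_haar_of_mem_rightBlock (h' hi)⟩]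
  rw [kernelForm_haar_of_const Op hc, blockAvg_of_const hc]

/-! ### Haar expansion on a tile -/

lemma discreteCoeff_eq (u : ℕ → ℝ) (Q : Tile M) :
    discreteCoeff u Q = fineScale M * (Real.sqrt Q.len)⁻¹ *
      (∑ i ∈ Q.leftBlock, u i - ∑ i ∈ Q.rightBlock, u i) := by
  have hL : ∑ i ∈ Q.leftBlock, u i * sample M Q.haar i =
      (∑ i ∈ Q.leftBlock, u i) * (Real.sqrt Q.len)⁻¹ := by
    rw [Finset.sum_mul]
    exact Finset.sum_congr rfl fun i hi => by rw [Q.sample_haar_of_mem_leftBlock hi]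
  have hR : ∑ i ∈ Q.rightBlock, u i * sample M Q.haar i =
      (∑ i ∈ Q.rightBlock, u i) * -(Real.sqrt Q.len)⁻¹ := by
    rw [Finset.sum_mul]
    exact Finset.sum_congr rfl fun i hi => by rw [Q.sample_haar_of_mem_rightBlock hi]
  rw [discreteCoeff, sum_range_mul_sample_haar, Q.block_eq_union,
    Finset.sum_union Q.disjoint_leftBlock_rightBlock, hL, hR]
  ring

lemma blockAvg_add_discreteCoeff_mul_haar (u : ℕ → ℝ) {Q : Tile M} {H : Finset ℕ} {j : ℕ}
    (hH : H = Q.leftBlock ∨ H = Q.rightBlock) (hj : j ∈ H) :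
    blockAvg u Q + discreteCoeff u Q * sample M Q.haar j = (∑ i ∈ H, u i) / 2 ^ Q.exp := by
  have hnorm : fineScale M * (Real.sqrt Q.len)⁻¹ * (Real.sqrt Q.len)⁻¹ = 1 / 2 ^ (Q.exp + 1) := by
    rw [_root_.mul_assoc, ← mul_inv, Real.mul_self_sqrt Q.len_pos.le, Tile.len, Tile.two_zpow_k]
    have := fineScale_pos (M := M)
    field_simp
  rw [blockAvg, Q.block_eq_union, Finset.sum_union Q.disjoint_leftBlock_rightBlock,
    discreteCoeff_eq]
  rcases hH with rfl | rfl
  · rw [Q.sample_haar_of_mem_leftBlock hj]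
    linear_combination (∑ i ∈ Q.leftBlock, u i - ∑ i ∈ Q.rightBlock, u i) * hnorm
  · rw [Q.sample_haar_of_mem_rightBlock hj]
    linear_combination (∑ i ∈ Q.rightBlock, u i - ∑ i ∈ Q.leftBlock, u i) * hnorm

lemma sum_erase_subtiles_of_exp_eq_zero {Q : Tile M} (hQ : Q.exp = 0) (c : Tile M → ℝ) :
    ∑ P ∈ (subtiles Q).erase Q, c P = 0 :=
  Finset.sum_eq_zero fun P hP => absurd (Tile.exp_lt_of_block_subset
    (mem_subtiles.mp (Finset.mem_of_mem_erase hP)) (Finset.ne_of_mem_erase hP)) (by omega)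

lemma sum_erase_subtiles_eq_sum_subtiles {Q C : Tile M} {H : Finset ℕ} {j : ℕ}
    (hH : H = Q.leftBlock ∨ H = Q.rightBlock) (hC : C.block = H) (hCexp : C.exp + 1 = Q.exp)
    (hj : j ∈ H) (c : Tile M → ℝ) :
    ∑ P ∈ (subtiles Q).erase Q, c P * sample M P.haar j =
      ∑ P ∈ subtiles C, c P * sample M P.haar j := by
  have hCQ : C.block ⊆ Q.block := by
    rw [hC, Q.block_eq_union]
    rcases hH with rfl | rfl
    exacts [Finset.subset_union_left, Finset.subset_union_right]
  refine (Finset.sum_subset (fun P hP => ?_) fun P hP hPC => ?_).symm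
  · rw [mem_subtiles] at hP
    refine Finset.mem_erase.mpr ⟨?_, mem_subtiles.mpr (hP.trans hCQ)⟩
    rintro rfl
    have := Tile.exp_le_of_block_subset hP
    omega
  · rw [Finset.mem_erase, mem_subtiles] at hP
    rw [P.sample_haar_of_notMem_block, mul_zero]
    refine fun hjP => hPC (mem_subtiles.mpr ?_)
    have hdisj := Q.disjoint_leftBlock_rightBlock
    rw [hC]
    rcases Tile.block_subset_half hP.2 hP.1 with h' | h' <;> rcases hH with rfl | rfl
    · exact h'
    · exact absurd (h' hjP) (Finset.disjoint_right.mp hdisj hj)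
    · exact absurd (h' hjP) (Finset.disjoint_left.mp hdisj hj)
    · exact h'

theorem eq_blockAvg_add_sum_subtiles (u : ℕ → ℝ) (Q : Tile M) {j : ℕ} (hj : j ∈ Q.block) :
    u j = blockAvg u Q + ∑ P ∈ subtiles Q, discreteCoeff u P * sample M P.haar j := by
  obtain ⟨H, hH, hjH⟩ : ∃ H, (H = Q.leftBlock ∨ H = Q.rightBlock) ∧ j ∈ H := by
    rw [Q.block_eq_union, Finset.mem_union] at hj
    rcases hj with h | h
    exacts [⟨_, Or.inl rfl, h⟩, ⟨_, Or.inr rfl, h⟩]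
  rw [← Finset.add_sum_erase _ _ (mem_subtiles.mpr subset_rfl), ← _root_.add_assoc,
    blockAvg_add_discreteCoeff_mul_haar u hH hjH]
  rcases Nat.eq_zero_or_pos Q.exp with h0 | hpos
  · have hHj : H = {j} := by
      rcases hH with rfl | rfl <;>
        simp only [Tile.leftBlock, Tile.rightBlock, h0, dyadicBlock_zero,
          Finset.mem_singleton] at hjH ⊢ <;> rw [hjH]
    rw [sum_erase_subtiles_of_exp_eq_zero h0, hHj, Finset.sum_singleton, h0, pow_zero, div_one,
      add_zero]
  · obtain ⟨C, hC, hCexp⟩ := Tile.exists_block_eq_half hpos hH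
    rw [sum_erase_subtiles_eq_sum_subtiles hH hC hCexp hjH, ← hC, ← hCexp, ← blockAvg]
    exact eq_blockAvg_add_sum_subtiles u C (hC ▸ hjH)
termination_by Q.exp
decreasing_by omega

/-! ### The splitting -/

lemma sum_kernelForm_mul_blockAvg (Op : PDCZ M) (u : ℕ → ℝ) (Q : Tile M) :
    ∑ P : Tile M,
        kernelForm Op (sample M P.haar) 1 * discreteCoeff u P * blockAvg (sample M Q.haar) P =
      ∑ P ∈ (subtiles Q).erase Q, discreteCoeff u P * kernelForm Op (sample M P.haar)
        (sample M Q.haar) := by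
  refine (Finset.sum_subset (Finset.subset_univ _) fun P _ hP => ?_).symm.trans
    (Finset.sum_congr rfl fun P hP => ?_)
  · rw [blockAvg_haar_eq_zero_of_notMem hP, mul_zero]
  · rw [Finset.mem_erase, mem_subtiles] at hP
    rw [kernelForm_haar_haar_of_ne Op hP.2 hP.1]
    ring

theorem kernelForm_haar_splitting (Op : PDCZ M) (u : ℕ → ℝ) (Q : Tile M) :
    kernelForm Op u (sample M Q.haar) =
      kernelForm Op (sample M Q.haar) (sample M Q.haar) * discreteCoeff u Q +
      kernelForm Op 1 (sample M Q.haar) * blockAvg u Q +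
      ∑ P : Tile M, kernelForm Op (sample M P.haar) 1 * discreteCoeff u P *
        blockAvg (sample M Q.haar) P := by
  have hexpand : kernelForm Op u (sample M Q.haar) = kernelForm Op
      (blockAvg u Q • 1 + ∑ P ∈ subtiles Q, discreteCoeff u P • sample M P.haar)
      (sample M Q.haar) :=
    kernelForm_haar_congr Op fun j hj => by
      simpa [Finset.sum_apply] using eq_blockAvg_add_sum_subtiles u Q hj
  rw [hexpand, sum_kernelForm_mul_blockAvg, map_add, map_smul, map_sum, LinearMap.add_apply,
    LinearMap.smul_apply, LinearMap.sum_apply,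
    ← Finset.add_sum_erase _ _ (mem_subtiles.mpr subset_rfl)]
  simp only [map_smul, LinearMap.smul_apply, smul_eq_mul]
  ring

/-- Lemma 7.1: splitting of a perfect dyadic CZ operator. -/
theorem statement14 (M : ℕ) (Op : PDCZ M) (f : ℝ → ℝ) (hf : IsTestFun M f)
    (Q : Tile M) :
    (∫ x, Op.app f x * Q.haar x) =
      (∫ x, Op.app Q.haar x * Q.haar x) * waveCoeff f Q +
      waveCoeff (Op.app (oneFn M)) Q * tileAvg f Q +
      ∑ᶠ P : Tile M, waveCoeff (Op.appT (oneFn M)) P * waveCoeff f P * tileAvg Q.haar P := by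
  have hf' := hf.isFineStep
  have hone : ∀ P : Tile M, waveCoeff (Op.appT (oneFn M)) P * waveCoeff f P * tileAvg Q.haar P =
      fineScale M ^ 2 * (kernelForm Op (sample M P.haar) 1 * discreteCoeff (sample M f) P *
        blockAvg (sample M Q.haar) P) := fun P => by
    rw [show Op.appT = Op.transpose.app from rfl, Op.transpose.waveCoeff_app isFineStep_oneFn,
      kernelForm_transpose,
      kernelForm_congr Op (v' := 1) (fun _ _ => rfl) fun _ hi => sample_oneFn hi,
      waveCoeff_eq_discreteCoeff hf', tileAvg_eq_blockAvg Q.isFineStep_haar]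
    ring
  change waveCoeff (Op.app f) Q = waveCoeff (Op.app Q.haar) Q * _ + _ + _
  rw [Op.waveCoeff_app hf', Op.waveCoeff_app Q.isFineStep_haar, Op.waveCoeff_app isFineStep_oneFn,
    kernelForm_congr Op (u' := 1) (fun _ hi => sample_oneFn hi) fun _ _ => rfl,
    waveCoeff_eq_discreteCoeff hf', tileAvg_eq_blockAvg hf', finsum_eq_sum_of_fintype,
    Finset.sum_congr rfl fun P _ => hone P, ← Finset.mul_sum, kernelForm_haar_splitting]
  ring

end Dyadic
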